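/- If x, y lie in the chain recurrent set of a continuous endomorphism f of a compact abelian topological group, then the product x·y lies in the chain recurrent set: given E-chains of lengths m and n from x to x and from y to y respectively, repeating them periodically up to length m·n yields, by pointwise multiplication, an E²-chain from x·y to itself. -/

import Mathlib

open Pointwise

/-- `EChainOfLength f E n x y c` : `c` is an `E`-chain of length `n` from `x` to `y`. -/
def EChainOfLength {G : Type*} [Group G] (f : G → G) (E : Set G) (n : ℕ) (x y : G)
    (c : ℕ → G) : Prop :=
  c 0 = x ∧ c n = y ∧ ∀ i < n, f (c i) * (c (i + 1))⁻¹ ∈ E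

namespace EChainOfLength

theorem step_mod {G : Type*} [Group G] {f : G → G} {E : Set G} {m : ℕ} {x : G} {a : ℕ → G}
    (ha : EChainOfLength f E m x x a) (hm : 0 < m) (i : ℕ) :
    f (a (i % m)) * (a ((i + 1) % m))⁻¹ ∈ E := by
  obtain ⟨h0, hm_end, hstep⟩ := ha
  have hi : i % m < m := Nat.mod_lt i hm
  have hstep_i := hstep _ hi
  rcases Nat.lt_or_ge (i % m + 1) m with hlt | hge
  · rwa [← Nat.mod_add_mod, Nat.mod_eq_of_lt hlt]
  · -- the last step of the chain ends at `a m = x = a 0`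
    have hwrap : i % m + 1 = m := by omega
    rw [hwrap, hm_end, ← h0] at hstep_i
    rwa [← Nat.mod_add_mod, hwrap, Nat.mod_self]

theorem mul_periodic {G : Type*} [CommGroup G] {f : G →* G} {E F : Set G} {m n k : ℕ}
    {x y : G} {a b : ℕ → G} (ha : EChainOfLength f E m x x a) (hb : EChainOfLength f F n y y b)
    (hm : 0 < m) (hn : 0 < n) (hmk : m ∣ k) (hnk : n ∣ k) :
    EChainOfLength f (E * F) k (x * y) (x * y) fun i => a (i % m) * b (i % n) := by
  refine ⟨by simp [ha.1, hb.1], ?_, fun i _ => ?_⟩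
  · simp [Nat.mod_eq_zero_of_dvd hmk, Nat.mod_eq_zero_of_dvd hnk, ha.1, hb.1]
  · rw [map_mul, mul_inv, mul_mul_mul_comm]
    exact Set.mul_mem_mul (ha.step_mod hm i) (hb.step_mod hn i)

end EChainOfLength

theorem mul_mem_chainRecurrent_chains_general {G : Type*} [CommGroup G] (f : G →* G)
    (E : Set G) (m n : ℕ) (hm : 1 ≤ m) (hn : 1 ≤ n)
    (x y : G) (a b : ℕ → G)
    (ha : EChainOfLength ⇑f E m x x a) (hb : EChainOfLength ⇑f E n y y b) :
    ∃ c : ℕ → G, EChainOfLength ⇑f (E * E) (m * n) (x * y) (x * y) c :=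
  ⟨_, ha.mul_periodic hb hm hn (dvd_mul_right m n) (dvd_mul_left n m)⟩

/-- Given an `E`-chain of length `m` from `x` to `x` and an `E`-chain of length `n`
from `y` to `y`, repeating them periodically and multiplying pointwise yields an
`E·E`-chain of length `m·n` from `x·y` to itself. -/
theorem mul_mem_chainRecurrent_chains {G : Type*} [CommGroup G] [TopologicalSpace G]
    [IsTopologicalGroup G] [CompactSpace G] (f : G →* G) (hf : Continuous f)
    (E : Set G) (hE : E ∈ nhds (1 : G)) (m n : ℕ) (hm : 1 ≤ m) (hn : 1 ≤ n)
    (x y : G) (a b : ℕ → G)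
    (ha : EChainOfLength ⇑f E m x x a) (hb : EChainOfLength ⇑f E n y y b) :
    ∃ c : ℕ → G, EChainOfLength ⇑f (E * E) (m * n) (x * y) (x * y) c :=
  mul_mem_chainRecurrent_chains_general f E m n hm hn x y a b ha hb
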